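/- arXiv:1410.6576 — 4 statements merged into one kernel-verified Lean document; each statement's English description precedes it below -/
import Mathlib

section
/- Let g, h : ℂ² → ℂ be holomorphic on a polydisc {(x,y) : |x|, |y| < r}, vanishing at (0,0), and suppose sup|g|, sup|h| < 1/100 and sup|∂g/∂y|, sup|∂h/∂y| ≤ M on this polydisc with (M + M)·r < 1/100 (so r·(‖g‖_{C¹} + ‖h‖_{C¹}) < 1/100). Fix x₀ with |x₀| < r and define z(θ) = 1/(x₀(1 + g(x₀,θ))) and w(θ) = θ(1 + h(x₀,θ))/(x₀(1 + g(x₀,θ))) for |θ| < r. Then for all such θ, |(dz/dθ)/(dw/dθ)| < 2·‖g‖_{C¹} where ‖g‖_{C¹} bounds |g| and its first derivatives on the polydisc. -/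
open Complex

/-!
Differentiating `z = 1/(x₀(1+g))` and `w = θ(1+h)/(x₀(1+g))` gives a common factor
`x₀/(x₀(1+g))²`, so `z'/w' = -g'/D` with `D = (1+g)(1+h) + θ(h'(1+g) - g'(1+h))`.
Since `g, h` are small, `(1+g)(1+h)` is close to `1`, and `r(M+M) < 1/100` makes the
`θ`-term small, so `‖D‖ > 1/2` and `‖z'/w'‖ < 2‖g'‖`.
-/

section Denominator

variable {𝕜 : Type*} [NormedField 𝕜]

/-- `a, b, a', b'` stand for `g, h, ∂g/∂θ, ∂h/∂θ` at `(x₀, θ)`. -/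
def slopeDenominator (a b a' b' θ : 𝕜) : 𝕜 :=
  (1 + a) * (1 + b) + θ * (b' * (1 + a) - a' * (1 + b))

theorem one_sub_norm_le_norm_one_add (a : 𝕜) : 1 - ‖a‖ ≤ ‖1 + a‖ := by
  simpa using norm_sub_norm_le (1 : 𝕜) (-a)

theorem norm_one_add_le (a : 𝕜) : ‖1 + a‖ ≤ 1 + ‖a‖ := by
  simpa using norm_add_le (1 : 𝕜) a

theorem one_half_lt_norm_slopeDenominator {a b a' b' θ : 𝕜}
    (ha : ‖a‖ < 1 / 100) (hb : ‖b‖ < 1 / 100)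
    (hθ : ‖θ‖ * (‖a'‖ + ‖b'‖) < 1 / 100) :
    1 / 2 < ‖slopeDenominator a b a' b' θ‖ := by
  have ha_lo := one_sub_norm_le_norm_one_add a
  have hb_lo := one_sub_norm_le_norm_one_add b
  have ha_hi := norm_one_add_le a
  have hb_hi := norm_one_add_le b
  have leading : (99 / 100) * (99 / 100) ≤ ‖(1 + a) * (1 + b)‖ := by
    rw [norm_mul]
    exact mul_le_mul (by linarith) (by linarith) (by norm_num) (norm_nonneg _)
  have perturbation : ‖θ * (b' * (1 + a) - a' * (1 + b))‖ ≤ 101 / 100 * (‖θ‖ * (‖a'‖ + ‖b'‖)) :=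
    calc ‖θ * (b' * (1 + a) - a' * (1 + b))‖
        ≤ ‖θ‖ * (‖b'‖ * ‖1 + a‖ + ‖a'‖ * ‖1 + b‖) := by
          rw [norm_mul, ← norm_mul b', ← norm_mul a']
          exact mul_le_mul_of_nonneg_left (norm_sub_le _ _) (norm_nonneg _)
      _ ≤ ‖θ‖ * (‖b'‖ * (101 / 100) + ‖a'‖ * (101 / 100)) := by
          gcongr <;> linarith
      _ = 101 / 100 * (‖θ‖ * (‖a'‖ + ‖b'‖)) := by ring
  have triangle := norm_sub_norm_le ((1 + a) * (1 + b)) (-(θ * (b' * (1 + a) - a' * (1 + b))))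
  rw [sub_neg_eq_add, norm_neg] at triangle
  unfold slopeDenominator
  linarith

end Denominator

theorem deriv_div_deriv_eq_neg_div_slopeDenominator {𝕜 : Type*} [NontriviallyNormedField 𝕜]
    {g h : 𝕜 → 𝕜} {g' h' x₀ θ : 𝕜} (hg : HasDerivAt g g' θ) (hh : HasDerivAt h h' θ)
    (hx₀ : x₀ ≠ 0) (hg1 : 1 + g θ ≠ 0) :
    deriv (fun t ↦ 1 / (x₀ * (1 + g t))) θ / deriv (fun t ↦ t * (1 + h t) / (x₀ * (1 + g t))) θ
      = -g' / slopeDenominator (g θ) (h θ) g' h' θ := by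
  have hden : HasDerivAt (fun t ↦ x₀ * (1 + g t)) (x₀ * g') θ := by
    simpa using (hg.const_add 1).const_mul x₀
  have hnum : HasDerivAt (fun t ↦ t * (1 + h t)) (1 + h θ + θ * h') θ := by
    simpa using (hasDerivAt_id θ).fun_mul (hh.const_add 1)
  have hS : x₀ * (1 + g θ) ≠ 0 := mul_ne_zero hx₀ hg1
  have hz : HasDerivAt (fun t ↦ 1 / (x₀ * (1 + g t))) (-(x₀ * g') / (x₀ * (1 + g θ)) ^ 2) θ := by
    simpa only [one_div] using hden.fun_inv hS
  have hw : HasDerivAt (fun t ↦ t * (1 + h t) / (x₀ * (1 + g t)))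
      (((1 + h θ + θ * h') * (x₀ * (1 + g θ)) - θ * (1 + h θ) * (x₀ * g')) /
        (x₀ * (1 + g θ)) ^ 2) θ :=
    hnum.div hden hS
  rw [hz.deriv, hw.deriv,
    div_div_div_cancel_right₀ (pow_ne_zero 2 hS), neg_div, neg_div, ← mul_div_mul_left g' _ hx₀]
  congr 2
  unfold slopeDenominator
  ring

theorem stmt5_general (r M K : ℝ) (hK : 0 < K)
    (g h : ℂ → ℂ → ℂ)
    (hgdiff : ∀ x y : ℂ, ‖x‖ < r → ‖y‖ < r →
      DifferentiableAt ℂ (g x) y)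
    (hhdiff : ∀ x y : ℂ, ‖x‖ < r → ‖y‖ < r →
      DifferentiableAt ℂ (h x) y)
    (hgsmall : ∀ x y : ℂ, ‖x‖ < r → ‖y‖ < r →
      ‖g x y‖ < 1 / 100)
    (hhsmall : ∀ x y : ℂ, ‖x‖ < r → ‖y‖ < r →
      ‖h x y‖ < 1 / 100)
    (hgM : ∀ x y : ℂ, ‖x‖ < r → ‖y‖ < r →
      ‖deriv (g x) y‖ ≤ M)
    (hhM : ∀ x y : ℂ, ‖x‖ < r → ‖y‖ < r →
      ‖deriv (h x) y‖ ≤ M)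
    (hMr : (M + M) * r < 1 / 100)
    (hKg : ∀ x y : ℂ, ‖x‖ < r → ‖y‖ < r →
      ‖g x y‖ ≤ K ∧ ‖deriv (g x) y‖ ≤ K)
    (x₀ : ℂ) (hx₀ : x₀ ≠ 0) (hx₀r : ‖x₀‖ < r)
    (z w : ℂ → ℂ)
    (hz : ∀ θ : ℂ, z θ = 1 / (x₀ * (1 + g x₀ θ)))
    (hw : ∀ θ : ℂ, w θ = θ * (1 + h x₀ θ) / (x₀ * (1 + g x₀ θ))) :
    ∀ θ : ℂ, ‖θ‖ < r →
      ‖deriv z θ / deriv w θ‖ < 2 * K := by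
  intro θ hθ
  have hgθ := hgsmall x₀ θ hx₀r hθ
  have hg'M := hgM x₀ θ hx₀r hθ
  have hh'M := hhM x₀ θ hx₀r hθ
  have hθ_small : ‖θ‖ * (‖deriv (g x₀) θ‖ + ‖deriv (h x₀) θ‖) < 1 / 100 :=
    calc _ ≤ r * (M + M) := by
          gcongr
          exact (norm_nonneg θ).trans hθ.le
      _ < 1 / 100 := by linarith
  have hD := one_half_lt_norm_slopeDenominator hgθ (hhsmall x₀ θ hx₀r hθ) hθ_small
  have hg1 : 1 + g x₀ θ ≠ 0 := by
    rw [← norm_pos_iff]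
    linarith [one_sub_norm_le_norm_one_add (g x₀ θ)]
  rw [funext hz, funext hw, deriv_div_deriv_eq_neg_div_slopeDenominator
    (hgdiff x₀ θ hx₀r hθ).hasDerivAt (hhdiff x₀ θ hx₀r hθ).hasDerivAt hx₀ hg1,
    norm_div, norm_neg, div_lt_iff₀ (by linarith)]
  nlinarith [(hKg x₀ θ hx₀r hθ).2]

/-- Verticality lemma in Favre's normal coordinates: with
`z(θ) = 1/(x₀(1+g(x₀,θ)))` and `w(θ) = θ(1+h(x₀,θ))/(x₀(1+g(x₀,θ)))` on the
polydisc `{|x|,|y| < r}`, under the smallness assumptions the quotient of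
derivatives satisfies `|z'(θ)/w'(θ)| < 2‖g‖_{C¹}`. -/
theorem stmt5 (r M K : ℝ) (hr : 0 < r) (hK : 0 < K)
    (g h : ℂ → ℂ → ℂ)
    (hg00 : g 0 0 = 0) (hh00 : h 0 0 = 0)
    (hgdiff : ∀ x y : ℂ, ‖x‖ < r → ‖y‖ < r →
      DifferentiableAt ℂ (g x) y)
    (hhdiff : ∀ x y : ℂ, ‖x‖ < r → ‖y‖ < r →
      DifferentiableAt ℂ (h x) y)
    (hgsmall : ∀ x y : ℂ, ‖x‖ < r → ‖y‖ < r →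
      ‖g x y‖ < 1 / 100)
    (hhsmall : ∀ x y : ℂ, ‖x‖ < r → ‖y‖ < r →
      ‖h x y‖ < 1 / 100)
    (hgM : ∀ x y : ℂ, ‖x‖ < r → ‖y‖ < r →
      ‖deriv (g x) y‖ ≤ M)
    (hhM : ∀ x y : ℂ, ‖x‖ < r → ‖y‖ < r →
      ‖deriv (h x) y‖ ≤ M)
    (hMr : (M + M) * r < 1 / 100)
    (hKg : ∀ x y : ℂ, ‖x‖ < r → ‖y‖ < r →
      ‖g x y‖ ≤ K ∧ ‖deriv (g x) y‖ ≤ K)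
    (hKh : ∀ x y : ℂ, ‖x‖ < r → ‖y‖ < r →
      ‖h x y‖ ≤ K ∧ ‖deriv (h x) y‖ ≤ K)
    (x₀ : ℂ) (hx₀ : x₀ ≠ 0) (hx₀r : ‖x₀‖ < r)
    (z w : ℂ → ℂ)
    (hz : ∀ θ : ℂ, z θ = 1 / (x₀ * (1 + g x₀ θ)))
    (hw : ∀ θ : ℂ, w θ = θ * (1 + h x₀ θ) / (x₀ * (1 + g x₀ θ))) :
    ∀ θ : ℂ, ‖θ‖ < r →
      ‖deriv z θ / deriv w θ‖ < 2 * K :=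
  stmt5_general r M K hK g h hgdiff hhdiff hgsmall hhsmall hgM hhM hMr hKg x₀ hx₀ hx₀r z w hz hw
end

section
/- The holomorphic map ψ : ℂ → ℙ², ψ(z) = [z : p(z) : 1] for a fixed polynomial p, has derivative uniformly bounded over ℂ with respect to the Fubini–Study metric; that is, there exists C > 0 such that for all z ∈ ℂ, ds(ψ(z), dψ_z(∂/∂θ)) ≤ C, so ψ(ℂ) is a Brody curve in ℙ². -/
/-!
Both `p'` and `z p' - p` have degree at most `deg p`, so at infinity they are `O(p(z))`.
Since the Fubini–Study denominator dominates both `1` and `‖p(z)‖²`, the squared speed of the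
curve is `O(1)` at infinity, and a continuous function on `ℂ` that is `O(1)` at infinity is
bounded.
-/

/-- The squared Fubini–Study norm of a tangent vector `(z',w')` at the point
`(z,w)` of the affine chart `ℂ² ⊂ ℙ²`. -/
noncomputable def fsNormSq (z w z' w' : ℂ) : ℝ :=
  (‖z'‖ ^ 2 + ‖w'‖ ^ 2 + ‖z * w' - z' * w‖ ^ 2) /
    (1 + ‖z‖ ^ 2 + ‖w‖ ^ 2) ^ 2

open Polynomial Asymptotics Bornology Filter

theorem Polynomial.degree_X_mul_derivative_sub_le {R : Type*} [Ring R] (p : R[X]) :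
    (X * derivative p - p).degree ≤ p.degree := by
  refine (degree_sub_le _ _).trans (max_le ?_ le_rfl)
  rcases eq_or_ne p 0 with rfl | hp
  · simp
  calc (X * derivative p).degree ≤ X.degree + (derivative p).degree := degree_mul_le _ _
    _ ≤ 1 + (derivative p).degree := by gcongr; exact degree_X_le
    _ = (derivative p).degree + 1 := add_comm _ _
    _ ≤ p.degree := Nat.WithBot.add_one_le_of_lt (degree_derivative_lt hp)

theorem fsNormSq_nonneg (z w z' w' : ℂ) : 0 ≤ fsNormSq z w z' w' := by
  unfold fsNormSq; positivity

theorem fsNormSq_le {z w z' w' : ℂ} {a b c : ℝ} (hz' : ‖z'‖ ≤ a) (hw' : ‖w'‖ ≤ b * ‖w‖)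
    (hzw : ‖z * w' - z' * w‖ ≤ c * ‖w‖) : fsNormSq z w z' w' ≤ a ^ 2 + b ^ 2 + c ^ 2 := by
  rw [fsNormSq, div_le_iff₀ (by positivity)]
  set A := 1 + ‖z‖ ^ 2 + ‖w‖ ^ 2
  have hA : 1 ≤ A ^ 2 := one_le_pow₀ (by simp only [A]; nlinarith [sq_nonneg ‖z‖])
  have hwA : ‖w‖ ^ 2 ≤ A ^ 2 := by simp only [A]; nlinarith [sq_nonneg ‖z‖, sq_nonneg ‖w‖]
  calc ‖z'‖ ^ 2 + ‖w'‖ ^ 2 + ‖z * w' - z' * w‖ ^ 2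
      ≤ a ^ 2 + (b * ‖w‖) ^ 2 + (c * ‖w‖) ^ 2 := by gcongr
    _ = a ^ 2 + (b ^ 2 + c ^ 2) * ‖w‖ ^ 2 := by ring
    _ ≤ a ^ 2 * A ^ 2 + (b ^ 2 + c ^ 2) * A ^ 2 := by
        gcongr; exact le_mul_of_one_le_right (sq_nonneg a) hA
    _ = (a ^ 2 + b ^ 2 + c ^ 2) * A ^ 2 := by ring

theorem Continuous.fsNormSq {X : Type*} [TopologicalSpace X] {f g f' g' : X → ℂ}
    (hf : Continuous f) (hg : Continuous g) (hf' : Continuous f') (hg' : Continuous g') :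
    Continuous fun x => fsNormSq (f x) (g x) (f' x) (g' x) := by
  unfold _root_.fsNormSq
  fun_prop (disch := intro x; positivity)

theorem Polynomial.fsNormSq_isBigO_cobounded (p : ℂ[X]) :
    (fun z => fsNormSq z (p.eval z) 1 (p.derivative.eval z)) =O[cobounded ℂ] (1 : ℂ → ℝ) := by
  obtain ⟨b, hb⟩ := (isBigO_cobounded_of_degree_le (degree_derivative_le (p := p))).bound
  obtain ⟨c, hc⟩ := (isBigO_cobounded_of_degree_le p.degree_X_mul_derivative_sub_le).bound
  refine IsBigO.of_bound (1 ^ 2 + b ^ 2 + c ^ 2) ?_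
  filter_upwards [hb, hc] with z hbz hcz
  have hcz' : ‖z * p.derivative.eval z - 1 * p.eval z‖ ≤ c * ‖p.eval z‖ := by simpa using hcz
  rw [Real.norm_of_nonneg (fsNormSq_nonneg _ _ _ _), Pi.one_apply, norm_one, mul_one]
  exact fsNormSq_le norm_one.le hbz hcz'

/-- The curve `z ↦ [z : p(z) : 1]` has uniformly bounded Fubini–Study derivative,
i.e. it is a Brody curve in `ℙ²`. -/
theorem stmt6 (p : Polynomial ℂ) :
    ∃ C > (0 : ℝ), ∀ z : ℂ,
      Real.sqrt (fsNormSq z (p.eval z) 1 (p.derivative.eval z)) ≤ C := by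
  have hcont : Continuous fun z => fsNormSq z (p.eval z) 1 (p.derivative.eval z) :=
    continuous_id.fsNormSq p.continuous continuous_const p.derivative.continuous
  have hbdd := hcont.isBounded_range_iff_isBigO.2
    (Metric.cobounded_eq_cocompact (α := ℂ) ▸ p.fsNormSq_isBigO_cobounded)
  obtain ⟨B, hB⟩ := isBounded_iff_forall_norm_le.1 hbdd
  refine ⟨Real.sqrt B + 1, by positivity, fun z => ?_⟩
  have hz := Real.sqrt_le_sqrt ((Real.le_norm_self _).trans (hB _ ⟨z, rfl⟩))
  linarith
end

section
/- The holomorphic map ψ : ℂ → ℂ² ⊂ ℙ² given by ψ(θ) = (e^θ, e^{iθ²}) is not Brody: the Fubini–Study norm ds(ψ(θ), dψ_θ(d/dθ)) is unbounded as θ ranges over ℂ. -/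
/-!
On the imaginary axis `θ = t i` both coordinates `e^{ti}` and `e^{-it²}` lie on the unit circle,
so the Fubini–Study denominator stays equal to `9`, while the second component `2iθ e^{iθ²}` of
the derivative has modulus `2|t|`. Hence the squared norm there is the quadratic
`(8t² + 4t + 2) / 9`, which is unbounded in `t`.
-/

open Complex

lemma fsNormSq_of_norm_eq_one {z w : ℂ} (hz : ‖z‖ = 1) (hw : ‖w‖ = 1) (z' w' : ℂ) :
    fsNormSq z w z' w' = (‖z'‖ ^ 2 + ‖w'‖ ^ 2 + ‖z * w' - z' * w‖ ^ 2) / 9 := by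
  rw [fsNormSq, hz, hw]
  norm_num

lemma fsNormSq_exp_on_imaginary_axis (t : ℝ) :
    fsNormSq (exp (t * I)) (exp (I * (t * I) ^ 2))
      (exp (t * I)) (2 * I * (t * I) * exp (I * (t * I) ^ 2)) = (8 * t ^ 2 + 4 * t + 2) / 9 := by
  have hz : ‖exp (t * I)‖ = 1 := norm_exp_ofReal_mul_I t
  have hw : ‖exp (I * (t * I) ^ 2)‖ = 1 := by
    rw [show I * (t * I) ^ 2 = ((-t ^ 2 : ℝ) : ℂ) * I by
      push_cast; linear_combination (t ^ 2 * I : ℂ) * I_sq]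
    exact norm_exp_ofReal_mul_I _
  have hI : 2 * I * (t * I) = ((-2 * t : ℝ) : ℂ) := by
    push_cast; linear_combination (2 * t : ℂ) * I_sq
  have hcross : exp (t * I) * (2 * I * (t * I) * exp (I * (t * I) ^ 2))
      - exp (t * I) * exp (I * (t * I) ^ 2)
      = exp (t * I) * exp (I * (t * I) ^ 2) * ((-(2 * t + 1) : ℝ) : ℂ) := by
    rw [hI]; push_cast; ring
  rw [fsNormSq_of_norm_eq_one hz hw, hcross, hI, norm_mul, norm_mul, norm_mul, hz, hw,
    norm_real, norm_real, Real.norm_eq_abs, Real.norm_eq_abs]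
  simp only [mul_one, one_mul, sq_abs]
  ring

/-- The map `θ ↦ (e^θ, e^{iθ²})` is not Brody: its Fubini–Study derivative norm
is unbounded over `ℂ`. (Its derivative at `θ` is `(e^θ, 2iθ·e^{iθ²})`.) -/
theorem stmt7 :
    ∀ C : ℝ, ∃ θ : ℂ,
      C < Real.sqrt (fsNormSq (Complex.exp θ) (Complex.exp (Complex.I * θ ^ 2))
        (Complex.exp θ) (2 * Complex.I * θ * Complex.exp (Complex.I * θ ^ 2))) := by
  intro C
  refine ⟨(3 * C : ℝ) * I, ?_⟩
  rw [fsNormSq_exp_on_imaginary_axis]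
  apply Real.lt_sqrt_of_sq_lt
  nlinarith [sq_nonneg (3 * C + 1)]
end

section
/- For each integer n ≥ 3, the holomorphic map f_n : ℂ → ℂ² ⊂ ℙ², f_n(z) = (z, exp(z^n)), is injective but is not Brody: the Fubini–Study norm of its derivative is unbounded on ℂ. -/
/-!
Injectivity is read off the first coordinate. For unboundedness, pick `c` with `c ^ n = i` and
follow the ray `z = r c`: there `exp (z ^ n)` has modulus one, so the denominator of the metric is
`(2 + r ^ 2) ^ 2`, while the term `z w' - z' w = (n z ^ n - 1) exp (z ^ n)` has modulus at least
`n r ^ n`. Hence the derivative has length at least `n r ^ n / (2 + r ^ 2)`, which tends to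
infinity as soon as `n ≥ 3`.
-/

open Complex

lemma exists_norm_eq_one_pow_eq_I {n : ℕ} (hn : n ≠ 0) : ∃ c : ℂ, ‖c‖ = 1 ∧ c ^ n = I := by
  obtain ⟨c, hc⟩ := IsAlgClosed.exists_pow_nat_eq I (Nat.pos_of_ne_zero hn)
  refine ⟨c, ?_, hc⟩
  have hnorm : ‖c‖ ^ n = 1 := by rw [← norm_pow, hc, norm_I]
  exact (pow_eq_one_iff_of_nonneg (norm_nonneg c) hn).mp hnorm

lemma div_le_sqrt_fsNormSq (z w z' w' : ℂ) :
    ‖z * w' - z' * w‖ / (1 + ‖z‖ ^ 2 + ‖w‖ ^ 2) ≤ √(fsNormSq z w z' w') := by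
  have hden : 0 ≤ 1 + ‖z‖ ^ 2 + ‖w‖ ^ 2 := by positivity
  rw [fsNormSq, Real.sqrt_div' _ (by positivity), Real.sqrt_sq hden]
  gcongr
  exact Real.le_sqrt_of_sq_le (by nlinarith [norm_nonneg z', norm_nonneg w'])

lemma natCast_mul_pow_div_le_sqrt_fsNormSq {n : ℕ} (hn : n ≠ 0) {c : ℂ} (hc : ‖c‖ = 1)
    (hcn : c ^ n = I) {r : ℝ} (hr : 0 ≤ r) :
    n * r ^ n / (2 + r ^ 2) ≤
      √(fsNormSq (r * c) (exp ((r * c) ^ n)) 1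
        (n * (r * c) ^ (n - 1) * exp ((r * c) ^ n))) := by
  set z : ℂ := r * c
  have hz : ‖z‖ = r := by rw [norm_mul, hc, mul_one, norm_real, Real.norm_of_nonneg hr]
  have hzn : z ^ n = ((r ^ n : ℝ) : ℂ) * I := by rw [mul_pow, hcn, ofReal_pow]
  have hw : ‖exp (z ^ n)‖ = 1 := by
    rw [hzn, norm_exp, mul_I_re, ofReal_im, neg_zero, Real.exp_zero]
  have hcross : z * (n * z ^ (n - 1) * exp (z ^ n)) - 1 * exp (z ^ n) =
      (n * z ^ n - 1) * exp (z ^ n) := by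
    have hzz : z * z ^ (n - 1) = z ^ n := by
      rw [← pow_succ', Nat.sub_add_cancel (Nat.one_le_iff_ne_zero.mpr hn)]
    linear_combination (n * exp (z ^ n)) * hzz
  have him : n * r ^ n ≤ ‖(n : ℂ) * z ^ n - 1‖ := by
    calc (n : ℝ) * r ^ n = |((n : ℂ) * z ^ n - 1).im| := by
          simp [hzn, -ofReal_pow, abs_of_nonneg (pow_nonneg hr n)]
      _ ≤ _ := abs_im_le_norm _
  calc (n : ℝ) * r ^ n / (2 + r ^ 2)
      ≤ ‖z * (n * z ^ (n - 1) * exp (z ^ n)) - 1 * exp (z ^ n)‖ /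
          (1 + ‖z‖ ^ 2 + ‖exp (z ^ n)‖ ^ 2) := by
        rw [hcross, norm_mul, hw, hz, mul_one, one_pow, show 1 + r ^ 2 + 1 = 2 + r ^ 2 by ring]
        gcongr
    _ ≤ _ := div_le_sqrt_fsNormSq _ _ _ _

lemma le_natCast_mul_pow_div {n : ℕ} (hn : 3 ≤ n) {r : ℝ} (hr : 1 ≤ r) :
    r ≤ n * r ^ n / (2 + r ^ 2) := by
  rw [le_div_iff₀ (by positivity)]
  have hn' : (3 : ℝ) ≤ n := by exact_mod_cast hn
  have hrn : r ^ 3 ≤ r ^ n := pow_le_pow_right₀ hr hn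
  nlinarith [pow_nonneg (zero_le_one.trans hr) 3]

/-- For `n ≥ 3`, the map `z ↦ (z, exp(z^n))` is injective but not Brody:
its Fubini–Study derivative norm (its derivative at `z` is
`(1, n·z^{n−1}·exp(z^n))`) is unbounded on `ℂ`. -/
theorem stmt8 (n : ℕ) (hn : 3 ≤ n) :
    Function.Injective (fun z : ℂ => (z, Complex.exp (z ^ n))) ∧
    ∀ C : ℝ, ∃ z : ℂ,
      C < Real.sqrt (fsNormSq z (Complex.exp (z ^ n)) 1
        ((n : ℂ) * z ^ (n - 1) * Complex.exp (z ^ n))) := by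
  refine ⟨fun a b hab => congrArg Prod.fst hab, fun C => ?_⟩
  obtain ⟨c, hc, hcn⟩ := exists_norm_eq_one_pow_eq_I (n := n) (by omega)
  refine ⟨(|C| + 1 : ℝ) * c, ?_⟩
  calc C < |C| + 1 := by linarith [le_abs_self C]
    _ ≤ n * (|C| + 1) ^ n / (2 + (|C| + 1) ^ 2) :=
        le_natCast_mul_pow_div hn (by linarith [abs_nonneg C])
    _ ≤ _ := natCast_mul_pow_div_le_sqrt_fsNormSq (by omega) hc hcn (by positivity)
end
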